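/- Let n ≥ 1 and define P : ℝ → ℝ^{4n} → ℝ³ → ℂ by P t x z := ∫_{τ ∈ ℝ³} exp( -( i·⟨τ, z⟩ + (1/2)·‖τ‖·(cosh ‖τ‖ / sinh ‖τ‖)·‖x‖² ) / t ) · ( ‖τ‖ / sinh ‖τ‖ )^{2n} dτ. Then for every s with 0 < s < 1 and every i ∈ {1,2,3}: ∫_{(x,z) ∈ ℝ^{4n} × ℝ³} P (1-s) x z · (∂_{z_i} P) s x z d(x,z) = 0, where ∂_{z_i}P s x z denotes the Fréchet derivative of the map z ↦ P s x z at z applied to the i-th standard basis vector of ℝ³, and the integral is over ℝ^{4n} × ℝ³ with Lebesgue measure. -/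
import Mathlib


open RealInnerProductSpace MeasureTheory

/-- The Beals–Gaveau–Greiner heat kernel (unnormalized) of the intrinsic sublaplacian on
the quaternionic Heisenberg group. -/
noncomputable def bggKernel (n : ℕ) (t : ℝ) (x : EuclideanSpace ℝ (Fin (4 * n)))
    (z : EuclideanSpace ℝ (Fin 3)) : ℂ :=
  ∫ τ : EuclideanSpace ℝ (Fin 3),
    Complex.exp (-((Complex.I * ((⟪τ, z⟫ : ℝ) : ℂ) +
        (((1 / 2 : ℝ) * ‖τ‖ * (Real.cosh ‖τ‖ / Real.sinh ‖τ‖) * ‖x‖ ^ 2 : ℝ) : ℂ)) /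
        (t : ℂ))) *
      (((‖τ‖ / Real.sinh ‖τ‖ : ℝ) : ℂ)) ^ (2 * n)

/-- The kernel is an even function of `z`. -/
lemma bggKernel_neg (n : ℕ) (t : ℝ) (x : EuclideanSpace ℝ (Fin (4 * n)))
    (z : EuclideanSpace ℝ (Fin 3)) : bggKernel n t x (-z) = bggKernel n t x z := by
  unfold bggKernel
  rw [← MeasureTheory.integral_neg_eq_self (μ := volume)
    (fun τ : EuclideanSpace ℝ (Fin 3) =>
      Complex.exp (-((Complex.I * ((⟪τ, z⟫ : ℝ) : ℂ) +
        (((1 / 2 : ℝ) * ‖τ‖ * (Real.cosh ‖τ‖ / Real.sinh ‖τ‖) * ‖x‖ ^ 2 : ℝ) : ℂ)) /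
        (t : ℂ))) *
      (((‖τ‖ / Real.sinh ‖τ‖ : ℝ) : ℂ)) ^ (2 * n))]
  congr 1
  ext τ
  simp [inner_neg_neg, inner_neg_left, inner_neg_right]

/-- Derivative of an even function is odd. -/
lemma fderiv_even_neg {E F : Type*} [NormedAddCommGroup E] [NormedSpace ℝ E]
    [NormedAddCommGroup F] [NormedSpace ℝ F]
    {f : E → F} (hf : ∀ z, f (-z) = f z) (z : E) (v : E) :
    fderiv ℝ f (-z) v = - fderiv ℝ f z v := by
  have hfe : f = f ∘ (fun w : E => -w) := funext fun w => (hf w).symm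
  have hneg : ∀ w : E, DifferentiableAt ℝ (fun w : E => -w) w :=
    fun w => ((hasFDerivAt_id w).neg).differentiableAt
  by_cases h : DifferentiableAt ℝ f (-z)
  · have h2 : fderiv ℝ f z = (fderiv ℝ f (-z)).comp (fderiv ℝ (fun w : E => -w) z) := by
      conv_lhs => rw [hfe]
      exact fderiv_comp z h (hneg z)
    have hneg' : fderiv ℝ (fun w : E => -w) z = -(ContinuousLinearMap.id ℝ E) :=
      ((hasFDerivAt_id z).neg).fderiv
    rw [h2, hneg']
    simp
  · have h' : ¬ DifferentiableAt ℝ f z := by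
      intro hz
      apply h
      have hz' : DifferentiableAt ℝ f (- -z) := by rw [neg_neg]; exact hz
      have : DifferentiableAt ℝ (f ∘ (fun w : E => -w)) (-z) :=
        hz'.comp (-z) (hneg (-z))
      rw [hfe]
      exact this
    rw [fderiv_zero_of_not_differentiableAt h, fderiv_zero_of_not_differentiableAt h']
    simp

/-- Formula (3) in the proof of Theorem 5.7: the convolution integral
`∫ P(1-s, x, z) · ∂_{z_i} P(s, x, z) d(x, z)` vanishes. -/
theorem integral_dz_bggKernel_eq_zero
    (n : ℕ) (hn : 1 ≤ n) (s : ℝ) (hs0 : 0 < s) (hs1 : s < 1) (i : Fin 3) :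
    ∫ p : EuclideanSpace ℝ (Fin (4 * n)) × EuclideanSpace ℝ (Fin 3),
      bggKernel n (1 - s) p.1 p.2 *
        fderiv ℝ (fun z => bggKernel n s p.1 z) p.2 (EuclideanSpace.single i 1)
      = 0 := by
  set G : EuclideanSpace ℝ (Fin (4 * n)) × EuclideanSpace ℝ (Fin 3) → ℂ := fun p =>
    bggKernel n (1 - s) p.1 p.2 *
      fderiv ℝ (fun z => bggKernel n s p.1 z) p.2 (EuclideanSpace.single i 1) with hG
  have hT : MeasurePreserving
      (fun p : EuclideanSpace ℝ (Fin (4 * n)) × EuclideanSpace ℝ (Fin 3) => (p.1, -p.2))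
      volume volume :=
    (MeasurePreserving.id volume).prod (Measure.measurePreserving_neg volume)
  have hTe : MeasurableEmbedding
      (fun p : EuclideanSpace ℝ (Fin (4 * n)) × EuclideanSpace ℝ (Fin 3) => (p.1, -p.2)) :=
    ((MeasurableEquiv.refl (EuclideanSpace ℝ (Fin (4 * n)))).prodCongr
      (MeasurableEquiv.neg (EuclideanSpace ℝ (Fin 3)))).measurableEmbedding
  have key : (∫ p : EuclideanSpace ℝ (Fin (4 * n)) × EuclideanSpace ℝ (Fin 3),
      G (p.1, -p.2)) = ∫ p, G p := hT.integral_comp hTe G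
  have hodd : ∀ p : EuclideanSpace ℝ (Fin (4 * n)) × EuclideanSpace ℝ (Fin 3),
      G (p.1, -p.2) = - G p := by
    intro p
    simp only [hG]
    rw [bggKernel_neg,
      fderiv_even_neg (fun z => bggKernel_neg n s p.1 z) p.2 (EuclideanSpace.single i 1)]
    ring
  have : ∫ p, G p = - ∫ p, G p := by
    calc ∫ p, G p
        = ∫ p : EuclideanSpace ℝ (Fin (4 * n)) × EuclideanSpace ℝ (Fin 3),
            G (p.1, -p.2) := key.symm
      _ = ∫ p, - G p := by simp_rw [hodd]
      _ = - ∫ p, G p := by rw [integral_neg]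
  have h0 : ∫ p, G p = 0 := by linear_combination this / 2
  exact h0
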